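/- arXiv:2311.07517 — 9 statements merged into one kernel-verified Lean document; each statement's English description precedes it below -/
import Mathlib

section
/- If f : X → ℝ is continuous and g : X → ℝ is quasicontinuous, then the pointwise sum f + g is quasicontinuous. -/
/-- `h` is quasicontinuous at `x`. -/
def QuasicontinuousAt {X Y : Type*} [TopologicalSpace X] [TopologicalSpace Y]
    (h : X → Y) (x : X) : Prop :=
  ∀ V : Set Y, IsOpen V → h x ∈ V → ∀ U : Set X, IsOpen U → x ∈ U →
    ∃ W : Set X, IsOpen W ∧ W.Nonempty ∧ W ⊆ U ∧ h '' W ⊆ V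

section

open Set

variable {X Y Z T : Type*} [TopologicalSpace X] [TopologicalSpace Y] [TopologicalSpace Z]
  [TopologicalSpace T]

theorem Continuous.comp_quasicontinuousAt {φ : Y → T} {h : X → Y} {x : X} (hφ : Continuous φ)
    (hh : QuasicontinuousAt h x) : QuasicontinuousAt (φ ∘ h) x := by
  intro V hV hxV U hU hxU
  obtain ⟨W, hW, hWne, hWU, hhW⟩ := hh (φ ⁻¹' V) (hV.preimage hφ) hxV U hU hxU
  exact ⟨W, hW, hWne, hWU, by rw [image_comp]; exact image_subset_iff.2 hhW⟩

theorem ContinuousAt.prodMk_quasicontinuousAt {f : X → Y} {g : X → Z} {x : X}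
    (hf : ContinuousAt f x) (hg : QuasicontinuousAt g x) :
    QuasicontinuousAt (fun y => (f y, g y)) x := by
  intro V hV hxV U hU hxU
  obtain ⟨A, B, hA, hB, hfA, hgB, hAB⟩ := isOpen_prod_iff.1 hV _ _ hxV
  -- `f` is only continuous at `x`, so `f ⁻¹' A` need not be open.
  have hxU' : x ∈ U ∩ interior (f ⁻¹' A) :=
    ⟨hxU, mem_interior_iff_mem_nhds.2 (hf.preimage_mem_nhds (hA.mem_nhds hfA))⟩
  obtain ⟨W, hW, hWne, hWU, hgW⟩ := hg B hB hgB _ (hU.inter isOpen_interior) hxU'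
  refine ⟨W, hW, hWne, hWU.trans inter_subset_left, ?_⟩
  rintro _ ⟨y, hy, rfl⟩
  exact hAB ⟨interior_subset (s := f ⁻¹' A) (hWU hy).2, hgW ⟨y, hy, rfl⟩⟩

end

theorem quasicontinuous_add_continuous {X : Type*} [TopologicalSpace X]
    (f g : X → ℝ) (hf : Continuous f) (hg : ∀ x, QuasicontinuousAt g x) :
    ∀ x, QuasicontinuousAt (fun y => f y + g y) x := fun x =>
  continuous_add.comp_quasicontinuousAt (hf.continuousAt.prodMk_quasicontinuousAt (hg x))
end

section
/- Let X be a topological space and f : X → Y a quasicontinuous function into a second-countable space Y with countable basis {Vₙ}. Then the set D_f of points of discontinuity of f equals the union over n of the sets f⁻¹(Vₙ) \ interior(f⁻¹(Vₙ)), and each set f⁻¹(Vₙ) \ interior(f⁻¹(Vₙ)) is nowhere dense; in particular, D_f is meager. -/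
open Set TopologicalSpace

section

variable {X Y : Type*} [TopologicalSpace X] [TopologicalSpace Y]

lemma IsOpen.isNowhereDense_frontier {s : Set X} (hs : IsOpen s) : IsNowhereDense (frontier s) := by
  rw [isClosed_frontier.isNowhereDense_iff, ← frontier_compl]
  exact interior_frontier hs.isClosed_compl

/-- For semi-open `s`, the set `s \ interior s` lies in the frontier of the open set `interior s`. -/
lemma isNowhereDense_diff_interior_of_subset_closure_interior {s : Set X}
    (hs : s ⊆ closure (interior s)) : IsNowhereDense (s \ interior s) := by
  refine (isOpen_interior (s := s)).isNowhereDense_frontier.mono ?_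
  rw [isOpen_interior.frontier_eq]
  exact sdiff_subset_sdiff_left hs

namespace TopologicalSpace.IsTopologicalBasis

variable {ι : Type*} {V : ι → Set Y}

lemma continuousAt_iff_forall_mem_interior_preimage (hV : IsTopologicalBasis (range V))
    {f : X → Y} {x : X} : ContinuousAt f x ↔ ∀ i, f x ∈ V i → x ∈ interior (f ⁻¹' V i) := by
  refine ⟨fun hf i hi => mem_interior_iff_mem_nhds.2 <| hf <|
    (hV.isOpen ⟨i, rfl⟩).mem_nhds hi, fun h => ?_⟩
  rw [ContinuousAt, hV.nhds_hasBasis.tendsto_right_iff]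
  rintro _ ⟨⟨i, rfl⟩, hi⟩
  exact mem_interior_iff_mem_nhds.1 (h i hi)

lemma setOf_not_continuousAt_eq_iUnion (hV : IsTopologicalBasis (range V)) (f : X → Y) :
    {x | ¬ ContinuousAt f x} = ⋃ i, (f ⁻¹' V i \ interior (f ⁻¹' V i)) := by
  ext x
  simp [hV.continuousAt_iff_forall_mem_interior_preimage]

end TopologicalSpace.IsTopologicalBasis

end

theorem discontinuity_set_of_quasicontinuous {X Y : Type*} [TopologicalSpace X]
    [TopologicalSpace Y] (f : X → Y) (V : ℕ → Set Y)
    (hV : TopologicalSpace.IsTopologicalBasis (Set.range V))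
    (hf : ∀ O : Set Y, IsOpen O → f ⁻¹' O ⊆ closure (interior (f ⁻¹' O))) :
    ({x | ¬ ContinuousAt f x} = ⋃ n, (f ⁻¹' V n \ interior (f ⁻¹' V n))) ∧
    (∀ n, IsNowhereDense (f ⁻¹' V n \ interior (f ⁻¹' V n))) ∧
    IsMeagre {x | ¬ ContinuousAt f x} := by
  have hD_eq := hV.setOf_not_continuousAt_eq_iUnion f
  have hnd : ∀ n, IsNowhereDense (f ⁻¹' V n \ interior (f ⁻¹' V n)) := fun n =>
    isNowhereDense_diff_interior_of_subset_closure_interior (hf _ (hV.isOpen ⟨n, rfl⟩))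
  refine ⟨hD_eq, hnd, ?_⟩
  rw [hD_eq]
  exact isMeagre_iUnion fun n => (hnd n).isMeagre
end

section
/- Let X be a topological space in which every nowhere dense set is countable, and let f : X → ℝ be quasicontinuous. Then the set of points of discontinuity of f is countable. -/
open Topology Filter Set ENNReal

/-! A point of discontinuity has oscillation at least `1/n` for some `n`, and by upper
semicontinuity of the oscillation each set `{x | 1/n ≤ oscillation f x}` is closed. It also has
empty interior: quasicontinuity puts, near any of its points, an open set on which `f` varies by
less than `1/n`. So the discontinuity set is a countable union of nowhere dense sets. -/

section

variable {X Y : Type*} [TopologicalSpace X]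

def Quasicontinuous [TopologicalSpace Y] (f : X → Y) : Prop :=
  ∀ O : Set Y, IsOpen O → f ⁻¹' O ⊆ closure (interior (f ⁻¹' O))

variable [PseudoEMetricSpace Y]

theorem oscillation_le_ediam_image (f : X → Y) {x : X} {s : Set X} (hs : s ∈ 𝓝 x) :
    oscillation f x ≤ Metric.ediam (f '' s) :=
  biInf_le _ (image_mem_map hs)

theorem upperSemicontinuous_oscillation (f : X → Y) : UpperSemicontinuous (oscillation f) := by
  intro x y hxy
  obtain ⟨S, hS, hSy⟩ : ∃ S ∈ (𝓝 x).map f, Metric.ediam S < y := by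
    simpa only [oscillation, iInf_lt_iff, exists_prop] using hxy
  filter_upwards [eventually_mem_nhds_iff.2 hS] with x' hx'
  exact (biInf_le Metric.ediam (show S ∈ (𝓝 x').map f from hx')).trans_lt hSy

theorem isClosed_setOf_le_oscillation (f : X → Y) (ε : ℝ≥0∞) :
    IsClosed {x | ε ≤ oscillation f x} :=
  (upperSemicontinuous_oscillation f).isClosed_preimage ε

theorem setOf_not_continuousAt_subset_iUnion_setOf_inv_le_oscillation (f : X → Y) :
    {x | ¬ContinuousAt f x} ⊆ ⋃ n : ℕ, {x | (n : ℝ≥0∞)⁻¹ ≤ oscillation f x} := by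
  intro x hx
  obtain ⟨n, hn⟩ := exists_inv_nat_lt (mt (Oscillation.eq_zero_iff_continuousAt f x).1 hx)
  exact mem_iUnion.2 ⟨n, hn.le⟩

theorem Quasicontinuous.interior_setOf_le_oscillation_eq_empty {f : X → Y}
    (hf : Quasicontinuous f) {ε : ℝ≥0∞} (hε : 0 < ε) :
    interior {x | ε ≤ oscillation f x} = ∅ := by
  refine eq_empty_iff_forall_notMem.2 fun x hx => ?_
  obtain ⟨δ, hδ0, hδε⟩ := exists_between hε
  set O := Metric.eball (f x) (δ / 2)
  have hO : Metric.ediam O < ε := calc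
    Metric.ediam O ≤ 2 * (δ / 2) := Metric.ediam_eball_le
    _ = δ := ENNReal.mul_div_cancel two_ne_zero ofNat_ne_top
    _ < ε := hδε
  have hxO : x ∈ closure (interior (f ⁻¹' O)) :=
    hf O Metric.isOpen_eball (Metric.mem_eball_self (ENNReal.half_pos hδ0.ne'))
  obtain ⟨y, hyA, hyO⟩ := mem_closure_iff.1 hxO _ isOpen_interior hx
  have hyε : y ∈ {x | ε ≤ oscillation f x} := interior_subset hyA
  have hosc : oscillation f y < ε := calc
    oscillation f y ≤ Metric.ediam (f '' interior (f ⁻¹' O)) :=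
      oscillation_le_ediam_image f (isOpen_interior.mem_nhds hyO)
    _ ≤ Metric.ediam O :=
      Metric.ediam_mono (image_subset_iff.2 interior_subset)
    _ < ε := hO
  exact not_le.2 hosc hyε

theorem Quasicontinuous.isNowhereDense_setOf_le_oscillation {f : X → Y}
    (hf : Quasicontinuous f) {ε : ℝ≥0∞} (hε : 0 < ε) :
    IsNowhereDense {x | ε ≤ oscillation f x} :=
  (isClosed_setOf_le_oscillation f ε).isNowhereDense_iff.2
    (hf.interior_setOf_le_oscillation_eq_empty hε)

theorem Quasicontinuous.countable_setOf_not_continuousAt {f : X → Y} (hf : Quasicontinuous f)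
    (hX : ∀ N : Set X, IsNowhereDense N → N.Countable) :
    {x | ¬ContinuousAt f x}.Countable :=
  (countable_iUnion fun n : ℕ =>
      hX _ (hf.isNowhereDense_setOf_le_oscillation (ENNReal.inv_pos.2 (natCast_ne_top n)))).mono
    (setOf_not_continuousAt_subset_iUnion_setOf_inv_le_oscillation f)

end

theorem countable_discontinuity_set {X : Type*} [TopologicalSpace X]
    (hX : ∀ N : Set X, IsNowhereDense N → N.Countable)
    (f : X → ℝ)
    (hf : ∀ O : Set ℝ, IsOpen O → f ⁻¹' O ⊆ closure (interior (f ⁻¹' O))) :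
    {x | ¬ ContinuousAt f x}.Countable :=
  Quasicontinuous.countable_setOf_not_continuousAt hf hX
end

section
/- Every first countable regular topological space is open Whyburn: for every open set A ⊆ X and every point x ∈ closure(A) \ A, there exists an open set B ⊆ A such that closure(B) \ A = {x}. -/
/-!
Take a decreasing basis of closed neighbourhoods `d n` of `x`. Since `x ∈ closure A`, regularity
gives nonempty open sets `V n` with `closure (V n) ⊆ A ∩ d n`; let `B = ⋃ n, V n`. The `V n`
accumulate at `x`, so `x ∈ closure B`. A point `y ≠ x` avoids some `d n`, and `B` lies in the
closed set `(⋃ m < n, closure (V m)) ∪ d n`, so if `y ∈ closure B` then `y ∈ closure (V m) ⊆ A`.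
-/

open Set Filter Topology

section

variable {X : Type*} [TopologicalSpace X]

theorem exists_isClosed_nhds_antitone_basis [RegularSpace X] [FirstCountableTopology X] (x : X) :
    ∃ d : ℕ → Set X, (∀ n, IsClosed (d n)) ∧ (𝓝 x).HasAntitoneBasis d := by
  obtain ⟨d, hd, hbasis⟩ := (closed_nhds_basis x).exists_antitone_subbasis
  exact ⟨d, fun n => (hd n).2, hbasis⟩

theorem IsOpen.exists_isOpen_nonempty_closure_subset [RegularSpace X] {U : Set X}
    (hU : IsOpen U) (hne : U.Nonempty) :
    ∃ V : Set X, IsOpen V ∧ V.Nonempty ∧ closure V ⊆ U := by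
  obtain ⟨p, hp⟩ := hne
  obtain ⟨V, hVo, hpV, hVU⟩ :=
    isCompact_singleton.exists_isOpen_closure_subset (nhdsSet_singleton (x := p) ▸ hU.mem_nhds hp)
  exact ⟨V, hVo, ⟨p, singleton_subset_iff.mp hpV⟩, hVU⟩

theorem closure_iUnion_subset_insert_of_subset_antitoneBasis [T1Space X] {x : X}
    {d V : ℕ → Set X} (hd : (𝓝 x).HasAntitoneBasis d) (hdc : ∀ n, IsClosed (d n))
    (hV : ∀ n, V n ⊆ d n) :
    closure (⋃ n, V n) ⊆ insert x (⋃ n, closure (V n)) := by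
  intro y hy
  rcases eq_or_ne y x with rfl | hyx
  · exact mem_insert _ _
  obtain ⟨n, hdn⟩ := hd.mem_iff.mp (isOpen_compl_singleton.mem_nhds hyx.symm)
  have hsplit : (⋃ m, V m) ⊆ (⋃ m ∈ Iio n, closure (V m)) ∪ d n := by
    refine iUnion_subset fun m => ?_
    rcases lt_or_ge m n with hm | hm
    · exact subset_closure.trans
        ((subset_biUnion_of_mem (u := fun m => closure (V m)) (mem_Iio.mpr hm)).trans
          subset_union_left)
    · exact (hV m).trans ((hd.antitone hm).trans subset_union_right)
  have hclosed : IsClosed ((⋃ m ∈ Iio n, closure (V m)) ∪ d n) :=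
    ((finite_Iio n).isClosed_biUnion fun m _ => isClosed_closure).union (hdc n)
  rcases closure_minimal hsplit hclosed hy with hy | hy
  · obtain ⟨m, -, hm⟩ := mem_iUnion₂.mp hy
    exact mem_insert_of_mem _ (mem_iUnion.mpr ⟨m, hm⟩)
  · exact absurd rfl (hdn hy)

theorem mem_closure_iUnion_of_subset_antitoneBasis {x : X} {d V : ℕ → Set X}
    (hd : (𝓝 x).HasAntitoneBasis d) (hV : ∀ n, V n ⊆ d n) (hne : ∀ n, (V n).Nonempty) :
    x ∈ closure (⋃ n, V n) := by
  choose p hp using hne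
  exact mem_closure_of_tendsto (hd.tendsto fun n => hV n (hp n))
    (Eventually.of_forall fun n => mem_iUnion.mpr ⟨n, hp n⟩)

end

theorem firstCountable_regular_openWhyburn {X : Type*} [TopologicalSpace X]
    [T1Space X] [RegularSpace X] [FirstCountableTopology X] :
    ∀ A : Set X, IsOpen A → ∀ x ∈ closure A \ A,
      ∃ B : Set X, IsOpen B ∧ B ⊆ A ∧ closure B \ A = {x} := by
  rintro A hA x ⟨hxA, hxnA⟩
  obtain ⟨d, hdc, hd⟩ := exists_isClosed_nhds_antitone_basis x
  have hV : ∀ n, ∃ V : Set X, IsOpen V ∧ V.Nonempty ∧ closure V ⊆ interior (d n) ∩ A := fun n =>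
    (isOpen_interior.inter hA).exists_isOpen_nonempty_closure_subset
      (mem_closure_iff_nhds.mp hxA _ (interior_mem_nhds.mpr (hd.mem n)))
  choose V hVo hVne hVsub using hV
  have hVA (n : ℕ) : closure (V n) ⊆ A := (hVsub n).trans inter_subset_right
  have hVd (n : ℕ) : V n ⊆ d n :=
    subset_closure.trans ((hVsub n).trans (inter_subset_left.trans interior_subset))
  refine ⟨⋃ n, V n, isOpen_iUnion hVo, iUnion_subset fun n => subset_closure.trans (hVA n), ?_⟩
  refine Subset.antisymm ?_ (singleton_subset_iff.mpr
    ⟨mem_closure_iUnion_of_subset_antitoneBasis hd hVd hVne, hxnA⟩)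
  rintro y ⟨hy, hyA⟩
  rcases closure_iUnion_subset_insert_of_subset_antitoneBasis hd hdc hVd hy with rfl | hy
  · rfl
  · obtain ⟨n, hn⟩ := mem_iUnion.mp hy
    exact absurd (hVA n hn) hyA
end

section
/- Let X be a regular topological space, U a regular open subset of X (U = interior (closure U)) such that U is not dense in X, and let B ⊆ closure(U) \ U. Then the indicator-type function f : X → ℝ defined by f(x) = 0 for x ∈ U ∪ B and f(x) = 1 otherwise is quasicontinuous. -/
/-!
A set squeezed between an open set `W` and its closure is semi-open. Here `U ∪ B` lies between
`U` and `closure U`, and its complement lies between `(closure U)ᶜ` and `Uᶜ`, which is the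
closure of `(closure U)ᶜ` precisely because `U` is regular open. A function constant on a set
and on its complement, both semi-open, is quasicontinuous: a point of the preimage of `V` has
its whole piece inside that preimage.
-/

open Set

section SemiOpen

variable {X : Type*} [TopologicalSpace X]

def IsSemiOpen (s : Set X) : Prop := s ⊆ closure (interior s)

theorem IsSemiOpen.of_isOpen_subset_closure {s W : Set X} (hW : IsOpen W) (hWs : W ⊆ s)
    (hsW : s ⊆ closure W) : IsSemiOpen s :=
  hsW.trans (closure_mono (interior_maximal hWs hW))

theorem IsSemiOpen.mono_closure_interior {s t : Set X} (hs : IsSemiOpen s) (hst : s ⊆ t) :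
    s ⊆ closure (interior t) :=
  hs.trans (closure_mono (interior_mono hst))

theorem isSemiOpen_preimage_of_piecewise_const {Y : Type*} {s : Set X} (hs : IsSemiOpen s)
    (hsc : IsSemiOpen sᶜ) {f : X → Y} {a b : Y} (ha : ∀ x ∈ s, f x = a)
    (hb : ∀ x ∉ s, f x = b) (V : Set Y) : IsSemiOpen (f ⁻¹' V) := by
  intro x hx
  by_cases hxs : x ∈ s
  · have hsV : s ⊆ f ⁻¹' V := fun y hy => by
      rw [mem_preimage, ha y hy, ← ha x hxs]; exact hx
    exact hs.mono_closure_interior hsV hxs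
  · have hsV : sᶜ ⊆ f ⁻¹' V := fun y hy => by
      rw [mem_preimage, hb y hy, ← hb x hxs]; exact hx
    exact hsc.mono_closure_interior hsV hxs

theorem isSemiOpen_union_of_subset_closure {U B : Set X} (hU : IsOpen U)
    (hB : B ⊆ closure U) : IsSemiOpen (U ∪ B) :=
  .of_isOpen_subset_closure hU subset_union_left (union_subset subset_closure hB)

theorem isSemiOpen_compl_union_of_subset_closure {U B : Set X}
    (hU : U = interior (closure U)) (hB : B ⊆ closure U) : IsSemiOpen (U ∪ B)ᶜ := by
  refine .of_isOpen_subset_closure (W := (closure U)ᶜ) isClosed_closure.isOpen_compl ?_ ?_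
  · exact compl_subset_compl.mpr (union_subset subset_closure hB)
  · rw [closure_compl, ← hU]
    exact compl_subset_compl.mpr subset_union_left

end SemiOpen

theorem indicator_of_regularOpen_quasicontinuous_general {X : Type*} [TopologicalSpace X]
    (U : Set X) (hU : U = interior (closure U))
    (B : Set X) (hB : B ⊆ closure U \ U)
    (f : X → ℝ) (hf0 : ∀ x ∈ U ∪ B, f x = 0) (hf1 : ∀ x ∉ U ∪ B, f x = 1) :
    ∀ V : Set ℝ, IsOpen V → f ⁻¹' V ⊆ closure (interior (f ⁻¹' V)) := by
  have hBU : B ⊆ closure U := fun x hx => (hB hx).1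
  have hUopen : IsOpen U := hU ▸ isOpen_interior
  intro V _
  exact isSemiOpen_preimage_of_piecewise_const (isSemiOpen_union_of_subset_closure hUopen hBU)
    (isSemiOpen_compl_union_of_subset_closure hU hBU) hf0 hf1 V

theorem indicator_of_regularOpen_quasicontinuous {X : Type*} [TopologicalSpace X]
    [RegularSpace X] (U : Set X) (hU : U = interior (closure U))
    (hnd : closure U ≠ Set.univ) (B : Set X) (hB : B ⊆ closure U \ U)
    (f : X → ℝ) (hf0 : ∀ x ∈ U ∪ B, f x = 0) (hf1 : ∀ x ∉ U ∪ B, f x = 1) :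
    ∀ V : Set ℝ, IsOpen V → f ⁻¹' V ⊆ closure (interior (f ⁻¹' V)) :=
  indicator_of_regularOpen_quasicontinuous_general U hU B hB f hf0 hf1
end

section
/- Every uncountable subspace of a Lusin space is again a Lusin space. -/
/-!
A nowhere dense subset of a subspace is nowhere dense in the whole space. A point of `Y` that is
isolated in `Y` and lies in the interior of `closure Y` is isolated in `X` (in a T₁ space), so
the isolated points of `Y` lie in the nowhere dense set `Y \ interior (closure Y)` or among the
isolated points of `X`.
-/

open Set

section

variable {X : Type*} [TopologicalSpace X]

theorem isNowhereDense_diff_interior_closure (s : Set X) :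
    IsNowhereDense (s \ interior (closure s)) :=
  isNowhereDense_iff_disjoint.2 <|
    disjoint_sdiff_left.mono_right (interior_mono (closure_mono sdiff_subset))

theorem isOpen_singleton_of_mem_interior_closure [T1Space X] {Y : Set X} {y : Y}
    (hy : IsOpen ({y} : Set Y)) (hint : (y : X) ∈ interior (closure Y)) :
    IsOpen ({(y : X)} : Set X) := by
  obtain ⟨V, hV, hVy⟩ := isOpen_induced_iff.1 hy
  have hVY : V ∩ Y = {(y : X)} := by
    ext x
    refine ⟨fun ⟨hxV, hxY⟩ => ?_, ?_⟩
    · have : (⟨x, hxY⟩ : Y) ∈ Subtype.val ⁻¹' V := hxV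
      rw [hVy] at this
      exact congrArg Subtype.val this
    · rintro rfl
      exact ⟨(hVy.symm ▸ rfl : y ∈ Subtype.val ⁻¹' V), y.2⟩
  have hW : V ∩ interior (closure Y) = {(y : X)} := by
    refine Subset.antisymm ?_ (singleton_subset_iff.2 ⟨(hVY ▸ rfl : (y : X) ∈ V ∩ Y).1, hint⟩)
    calc V ∩ interior (closure Y) ⊆ V ∩ closure Y := inter_subset_inter_right _ interior_subset
      _ ⊆ closure (V ∩ Y) := hV.inter_closure
      _ = {(y : X)} := by rw [hVY, closure_singleton]
  exact hW ▸ hV.inter isOpen_interior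

theorem setOf_isOpen_singleton_subtype_subset [T1Space X] (Y : Set X) :
    {y : Y | IsOpen ({y} : Set Y)} ⊆
      Subtype.val ⁻¹' ((Y \ interior (closure Y)) ∪ {x : X | IsOpen ({x} : Set X)}) := by
  intro y hy
  by_cases hint : (y : X) ∈ interior (closure Y)
  · exact Or.inr (isOpen_singleton_of_mem_interior_closure hy hint)
  · exact Or.inl ⟨y.2, hint⟩

end

theorem uncountable_subspace_of_lusin_is_lusin_general {X : Type*} [TopologicalSpace X]
    [T2Space X]
    (h1 : ∀ N : Set X, IsNowhereDense N → N.Countable)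
    (h2 : {x : X | IsOpen ({x} : Set X)}.Countable)
    (Y : Set X) (hY : ¬ Y.Countable) :
    (∀ N : Set Y, IsNowhereDense N → N.Countable) ∧
    {y : Y | IsOpen ({y} : Set Y)}.Countable ∧
    ¬ (Set.univ : Set Y).Countable := by
  refine ⟨fun N hN => ?_, ?_, fun h => hY (countable_coe_iff.1 (countable_univ_iff.1 h))⟩
  · exact ((h1 _ hN.image_val).preimage Subtype.val_injective).mono (subset_preimage_image _ _)
  · exact (((h1 _ (isNowhereDense_diff_interior_closure Y)).union h2).preimage
      Subtype.val_injective).mono (setOf_isOpen_singleton_subtype_subset Y)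

theorem uncountable_subspace_of_lusin_is_lusin {X : Type*} [TopologicalSpace X]
    [T2Space X]
    (h1 : ∀ N : Set X, IsNowhereDense N → N.Countable)
    (h2 : {x : X | IsOpen ({x} : Set X)}.Countable)
    (h3 : ¬ (Set.univ : Set X).Countable)
    (Y : Set X) (hY : ¬ Y.Countable) :
    (∀ N : Set Y, IsNowhereDense N → N.Countable) ∧
    {y : Y | IsOpen ({y} : Set Y)}.Countable ∧
    ¬ (Set.univ : Set Y).Countable :=
  uncountable_subspace_of_lusin_is_lusin_general h1 h2 Y hY
end

section
/- Let X be an uncountable open Whyburn regular space that is 𝒦-Lindelöf, i.e., every family 𝒰 of open subsets of X with X = ⋃{closure(U) : U ∈ 𝒰} has a countable subfamily 𝒰' with X = ⋃{closure(U) : U ∈ 𝒰'}. Then every nowhere dense subset of X is countable. -/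
theorem nowhereDense_countable_of_kLindelof {X : Type*} [TopologicalSpace X]
    [T1Space X] [RegularSpace X]
    (hunc : ¬ (Set.univ : Set X).Countable)
    (hW : ∀ A : Set X, IsOpen A → ∀ x ∈ closure A \ A,
      ∃ B : Set X, IsOpen B ∧ B ⊆ A ∧ closure B \ A = {x})
    (hKL : ∀ 𝒰 : Set (Set X), (∀ U ∈ 𝒰, IsOpen U) →
      (⋃ U ∈ 𝒰, closure U) = Set.univ →
      ∃ 𝒰' ⊆ 𝒰, 𝒰'.Countable ∧ (⋃ U ∈ 𝒰', closure U) = Set.univ) :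
    ∀ N : Set X, IsNowhereDense N → N.Countable := by
  intro N hN
  set A : Set X := (closure N)ᶜ with hA
  have hAopen : IsOpen A := isClosed_closure.isOpen_compl
  have hNint : interior (closure N) = ∅ := hN
  have hAcl : closure A = Set.univ := by
    rw [hA, closure_compl, hNint, Set.compl_empty]
  choose! B hBopen hBsub hBcl using hW A hAopen
  have hmem : ∀ x ∈ closure N, x ∈ closure A \ A := fun x hx =>
    ⟨by rw [hAcl]; trivial, fun h => h hx⟩
  set 𝒰 : Set (Set X) := (B '' closure N) ∪ {V | IsOpen V ∧ closure V ⊆ A} with h𝒰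
  have hopen : ∀ U ∈ 𝒰, IsOpen U := by
    rintro U (⟨x, hx, rfl⟩ | ⟨hV, _⟩)
    · exact hBopen x (hmem x hx)
    · exact hV
  have hcov : (⋃ U ∈ 𝒰, closure U) = Set.univ := by
    apply Set.eq_univ_of_forall
    intro x
    by_cases hx : x ∈ closure N
    · refine Set.mem_biUnion (Set.mem_union_left _ ⟨x, hx, rfl⟩) ?_
      have := hBcl x (hmem x hx)
      have : x ∈ closure (B x) \ A := this ▸ rfl
      exact this.1
    · have hxA : x ∈ A := hx
      obtain ⟨t, ht, htcl, hts⟩ := exists_mem_nhds_isClosed_subset (hAopen.mem_nhds hxA)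
      refine Set.mem_biUnion (Set.mem_union_right _ ⟨isOpen_interior, ?_⟩)
        (subset_closure (mem_interior_iff_mem_nhds.mpr ht))
      calc closure (interior t) ⊆ closure t := closure_mono interior_subset
        _ = t := htcl.closure_eq
        _ ⊆ A := hts
  obtain ⟨𝒰', hsub, hcnt, hcov'⟩ := hKL 𝒰 hopen hcov
  have hsubset : closure N ⊆ ⋃ U ∈ 𝒰', closure U \ A := by
    intro y hy
    have : y ∈ ⋃ U ∈ 𝒰', closure U := by rw [hcov']; trivial
    obtain ⟨U, hU, hyU⟩ := Set.mem_iUnion₂.mp this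
    exact Set.mem_biUnion hU ⟨hyU, fun h => h hy⟩
  have hcases : ∀ U ∈ 𝒰', (closure U \ A).Countable := by
    intro U hU
    rcases hsub hU with ⟨x, hx, rfl⟩ | ⟨_, hVA⟩
    · rw [hBcl x (hmem x hx)]; exact Set.countable_singleton x
    · have : closure U \ A = ∅ := by
        rw [Set.diff_eq_empty]; exact hVA
      rw [this]; exact Set.countable_empty
  have hCcnt : (closure N).Countable :=
    ((hcnt.biUnion hcases)).mono hsubset
  exact hCcnt.mono subset_closure
end

section
/- Let X be an uncountable open Whyburn regular 𝒦-Lindelöf space. Then X has at most countably many isolated points. -/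
/-!
If the isolated points `D` were uncountable, 𝒦-Lindelöfness would give a point `x` such that
`closure U ∩ D` is uncountable whenever `U` is open with `x ∈ closure U`; such an `x` lies in
`closure D \ D`. The open Whyburn property yields an open `B ⊆ D` with `closure B \ D = {x}`, so
`C = closure B ∩ D` is an uncountable set of isolated points with `closure C \ C = {x}`. Split `C`
into two uncountable halves; `x` is in the closure of one of them, `C₁` say. Then the closures of
the singletons of the other half `C₂`, together with `closure (closure C₂)ᶜ ⊇ closure C₁ ∋ x`,
cover `X`, and a countable subcover exhibits `C₂` as countable.
-/

open Set

section

variable {X : Type*} [TopologicalSpace X]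

variable (X) in
def IsKLindelof : Prop :=
  ∀ 𝒰 : Set (Set X), (∀ U ∈ 𝒰, IsOpen U) → (⋃ U ∈ 𝒰, closure U) = univ →
    ∃ 𝒰' ⊆ 𝒰, 𝒰'.Countable ∧ (⋃ U ∈ 𝒰', closure U) = univ

variable (X) in
def isolatedPoints : Set X :=
  {x | IsOpen ({x} : Set X)}

theorem isOpen_isolatedPoints : IsOpen (isolatedPoints X) :=
  isOpen_iff_forall_mem_open.2 fun x hx => ⟨{x}, singleton_subset_iff.2 hx, hx, rfl⟩

theorem mem_of_mem_closure_of_mem_isolatedPoints {s : Set X} {x : X}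
    (hx : x ∈ isolatedPoints X) (h : x ∈ closure s) : x ∈ s := by
  simpa using mem_closure_iff.1 h {x} hx rfl

theorem closure_inter_subset_of_subset_isolatedPoints {s E : Set X}
    (hE : E ⊆ isolatedPoints X) : closure s ∩ E ⊆ s :=
  fun _ hy => mem_of_mem_closure_of_mem_isolatedPoints (hE hy.2) hy.1

theorem mem_closure_diff_of_forall_not_countable {S : Set X} {x : X}
    (hS : S ⊆ isolatedPoints X)
    (hx : ∀ U, IsOpen U → x ∈ closure U → ¬(closure U ∩ S).Countable) :
    x ∈ closure S \ S := by
  refine ⟨by_contra fun hxS => hx _ isClosed_closure.isOpen_compl (subset_closure hxS) ?_,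
    fun hxS => hx {x} (hS hxS) (subset_closure rfl) ?_⟩
  · exact countable_empty.mono fun y hy =>
      closure_inter_subset_of_subset_isolatedPoints hS hy (subset_closure hy.2)
  · exact (countable_singleton x).mono (closure_inter_subset_of_subset_isolatedPoints hS)

theorem Set.exists_union_disjoint_not_countable {α : Type*} {s : Set α}
    (hs : ¬s.Countable) :
    ∃ t u : Set α, t ∪ u = s ∧ Disjoint t u ∧ ¬t.Countable ∧ ¬u.Countable := by
  obtain ⟨t, u, rfl, htu, hcard⟩ :=
    Set.Infinite.exists_union_disjoint_cardinal_eq_of_infinite fun h => hs h.countable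
  have hcount : t.Countable ↔ u.Countable := by
    simp only [← Cardinal.le_aleph0_iff_set_countable, hcard]
  exact ⟨t, u, rfl, htu, fun ht => hs (ht.union (hcount.1 ht)),
    fun hu => hs ((hcount.2 hu).union hu)⟩

namespace IsKLindelof

theorem countable_of_closure_inter_countable (hKL : IsKLindelof X) {𝒰 : Set (Set X)}
    (h𝒰 : ∀ U ∈ 𝒰, IsOpen U) (hcov : (⋃ U ∈ 𝒰, closure U) = univ) {S : Set X}
    (hS : ∀ U ∈ 𝒰, (closure U ∩ S).Countable) : S.Countable := by
  obtain ⟨𝒱, h𝒱𝒰, h𝒱, hcov𝒱⟩ := hKL 𝒰 h𝒰 hcov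
  have hS𝒱 : S = ⋃ U ∈ 𝒱, closure U ∩ S := by
    rw [← iUnion₂_inter, hcov𝒱, univ_inter]
  rw [hS𝒱]
  exact h𝒱.biUnion fun U hU => hS U (h𝒱𝒰 hU)

theorem exists_forall_not_countable (hKL : IsKLindelof X) {S : Set X} (hS : ¬S.Countable) :
    ∃ x, ∀ U, IsOpen U → x ∈ closure U → ¬(closure U ∩ S).Countable := by
  by_contra! h
  choose U hU hxU hUS using h
  exact hS <| hKL.countable_of_closure_inter_countable (forall_mem_range.2 hU)
    (eq_univ_of_forall fun x => mem_biUnion (mem_range_self x) (hxU x)) (forall_mem_range.2 hUS)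

theorem countable_of_subset_isolatedPoints (hKL : IsKLindelof X) {E : Set X}
    (hE : E ⊆ isolatedPoints X) (h : closure E \ E ⊆ closure (closure E)ᶜ) : E.Countable := by
  refine hKL.countable_of_closure_inter_countable
    (𝒰 := insert (closure E)ᶜ ((fun b => {b}) '' E)) ?_ ?_ ?_
  · rintro U (rfl | ⟨b, hb, rfl⟩)
    · exact isClosed_closure.isOpen_compl
    · exact hE hb
  · refine eq_univ_of_forall fun y => ?_
    by_cases hyE : y ∈ E
    · exact mem_biUnion (mem_insert_of_mem _ (mem_image_of_mem _ hyE)) (subset_closure rfl)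
    by_cases hy : y ∈ closure E
    · exact mem_biUnion (mem_insert _ _) (h ⟨hy, hyE⟩)
    · exact mem_biUnion (mem_insert _ _) (subset_closure hy)
  · rintro U (rfl | ⟨b, -, rfl⟩)
    · exact countable_empty.mono fun y hy =>
        closure_inter_subset_of_subset_isolatedPoints hE hy (subset_closure hy.2)
    · exact (countable_singleton b).mono (closure_inter_subset_of_subset_isolatedPoints hE)

theorem countable_of_disjoint_of_closure_diff_subset (hKL : IsKLindelof X) {s t : Set X}
    (hs : s ⊆ isolatedPoints X) (ht : t ⊆ isolatedPoints X) (hst : Disjoint s t)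
    (h : closure t \ t ⊆ closure s) : t.Countable :=
  hKL.countable_of_subset_isolatedPoints ht <| h.trans <| closure_mono fun _ hzs hzt =>
    disjoint_left.1 hst hzs (mem_of_mem_closure_of_mem_isolatedPoints (hs hzs) hzt)

theorem countable_of_closure_diff_eq_singleton (hKL : IsKLindelof X) {C : Set X} {x : X}
    (hC : C ⊆ isolatedPoints X) (hCx : closure C \ C = {x}) : C.Countable := by
  by_contra hunc
  obtain ⟨C₁, C₂, rfl, hdisj, h₁, h₂⟩ := exists_union_disjoint_not_countable hunc
  have hsub : ∀ t ⊆ C₁ ∪ C₂, closure t \ t ⊆ {x} := fun t htC y hy =>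
    hCx ▸ ⟨closure_mono htC hy.1,
      fun hyC => hy.2 (mem_of_mem_closure_of_mem_isolatedPoints (hC hyC) hy.1)⟩
  have hx : x ∈ closure C₁ ∪ closure C₂ := by
    rw [← closure_union]
    exact (hCx.symm ▸ mem_singleton x : x ∈ closure (C₁ ∪ C₂) \ (C₁ ∪ C₂)).1
  rcases hx with hx | hx
  · exact h₂ <| hKL.countable_of_disjoint_of_closure_diff_subset (subset_union_left.trans hC)
      (subset_union_right.trans hC) hdisj
      ((hsub _ subset_union_right).trans (singleton_subset_iff.2 hx))
  · exact h₁ <| hKL.countable_of_disjoint_of_closure_diff_subset (subset_union_right.trans hC)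
      (subset_union_left.trans hC) hdisj.symm
      ((hsub _ subset_union_left).trans (singleton_subset_iff.2 hx))

end IsKLindelof

end

theorem isolated_points_countable_of_kLindelof_general {X : Type*} [TopologicalSpace X]
    (hW : ∀ A : Set X, IsOpen A → ∀ x ∈ closure A \ A,
      ∃ B : Set X, IsOpen B ∧ B ⊆ A ∧ closure B \ A = {x})
    (hKL : ∀ 𝒰 : Set (Set X), (∀ U ∈ 𝒰, IsOpen U) →
      (⋃ U ∈ 𝒰, closure U) = Set.univ →
      ∃ 𝒰' ⊆ 𝒰, 𝒰'.Countable ∧ (⋃ U ∈ 𝒰', closure U) = Set.univ) :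
    {x : X | IsOpen ({x} : Set X)}.Countable := by
  change (isolatedPoints X).Countable
  by_contra hD
  obtain ⟨x, hx⟩ := IsKLindelof.exists_forall_not_countable hKL hD
  obtain ⟨B, hBo, hBD, hBx⟩ :=
    hW _ isOpen_isolatedPoints x (mem_closure_diff_of_forall_not_countable subset_rfl hx)
  have hxB : x ∈ closure B := (hBx.symm ▸ mem_singleton x : x ∈ closure B \ _).1
  have hclosure : closure (closure B ∩ isolatedPoints X) = closure B :=
    (closure_minimal inter_subset_left isClosed_closure).antisymm
      (closure_mono (subset_inter subset_closure hBD))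
  refine hx B hBo hxB (IsKLindelof.countable_of_closure_diff_eq_singleton hKL
    inter_subset_right (x := x) ?_)
  rw [hclosure, sdiff_self_inter, hBx]

theorem isolated_points_countable_of_kLindelof {X : Type*} [TopologicalSpace X]
    [T1Space X] [RegularSpace X]
    (hunc : ¬ (Set.univ : Set X).Countable)
    (hW : ∀ A : Set X, IsOpen A → ∀ x ∈ closure A \ A,
      ∃ B : Set X, IsOpen B ∧ B ⊆ A ∧ closure B \ A = {x})
    (hKL : ∀ 𝒰 : Set (Set X), (∀ U ∈ 𝒰, IsOpen U) →
      (⋃ U ∈ 𝒰, closure U) = Set.univ →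
      ∃ 𝒰' ⊆ 𝒰, 𝒰'.Countable ∧ (⋃ U ∈ 𝒰', closure U) = Set.univ) :
    {x : X | IsOpen ({x} : Set X)}.Countable :=
  isolated_points_countable_of_kLindelof_general hW hKL
end

section
/- Let κ be an uncountable cardinal, {X_λ}_{λ∈Λ} a family of topological spaces each of tightness < κ such that every finite product ∏_{i=1}^n X_{λ_i} has tightness < κ, and p ∈ ∏_λ X_λ. Then the Σ_κ-product Σ_κ(p) = {x ∈ ∏_λ X_λ : |{λ : x_λ ≠ p_λ}| < κ} has tightness < κ. (Special case sufficient: for X_λ = ℝ for all λ, the subspace {x ∈ ℝ^Λ : |{λ : x_λ ≠ p_λ}| < κ} of ℝ^Λ has tightness < κ for regular uncountable κ.) -/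
/-!
Fix `A` and `z ∈ closure A`. Tightness of the finite subproducts gives, for every finite set `F`
of coordinates, a set `T F ⊆ A` of size `< κ` whose projection to `F` accumulates at that of `z`.
A countable closing-off argument, using regularity of `κ > ℵ₀`, produces a set `S` of `< κ`
coordinates containing the support of `z` and the supports of all `T F` with `F ⊆ S`.
Then `B = ⋃_{F ⊆ S} T F` has size `< κ`, and `z ∈ closure B`: a basic neighbourhood of `z`
restricts finitely many coordinates, those in `S` are handled by `T F`, and off `S` every point
of `B` agrees with `p`, hence with `z`.
-/

universe u

/-- The tightness of `Z` is (strictly) less than `κ`. -/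
def TightnessLT (Z : Type u) [TopologicalSpace Z] (κ : Cardinal.{u}) : Prop :=
  ∀ (A : Set Z) (z : Z), z ∈ closure A →
    ∃ B ⊆ A, Cardinal.mk B < κ ∧ z ∈ closure B

open Cardinal Set

section Cardinal

variable {α : Type u} {κ : Cardinal.{u}}

lemma mk_iUnion_lt_of_isRegular {ι : Type u} {f : ι → Set α} (hreg : κ.IsRegular)
    (hι : #ι < κ) (hf : ∀ i, #(f i) < κ) : #(⋃ i, f i) < κ :=
  mk_iUnion_le_sum_mk.trans_lt (sum_lt_of_isRegular hreg hι hf)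

lemma mk_iUnion_nat_lt_of_isRegular {f : ℕ → Set α} (hκ : ℵ₀ < κ) (hreg : κ.IsRegular)
    (hf : ∀ n, #(f n) < κ) : #(⋃ n, f n) < κ := by
  have h := mk_iUnion_le_sum_mk_lift (f := f)
  rw [lift_uzero] at h
  exact h.trans_lt (sum_lt_lift_of_isRegular hreg (by simpa using hκ) hf)

lemma mk_finset_lt (hκ : ℵ₀ < κ) (h : #α < κ) : #(Finset α) < κ := by
  rcases finite_or_infinite α with hα | hα
  · exact (lt_aleph0_of_finite _).trans hκ
  · rwa [mk_finset_of_infinite]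

lemma mk_finset_subset_lt (hκ : ℵ₀ < κ) {S : Set α} (hS : #S < κ) :
    #{F : Finset α // ↑F ⊆ S} < κ := by
  classical
  refine (mk_le_of_surjective (f := fun F : Finset S => ⟨F.map (Function.Embedding.subtype _),
    by simp⟩) fun F => ⟨F.1.subtype (· ∈ S), ?_⟩).trans_lt (mk_finset_lt hκ hS)
  exact Subtype.ext (Finset.subtype_map_of_mem fun _ hx => F.2 hx)

lemma exists_superset_card_lt_finset_closed (hκ : ℵ₀ < κ) (hreg : κ.IsRegular)
    (g : Finset α → Set α) (hg : ∀ F, #(g F) < κ) {S₀ : Set α} (hS₀ : #S₀ < κ) :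
    ∃ S, S₀ ⊆ S ∧ #S < κ ∧ ∀ F : Finset α, ↑F ⊆ S → g F ⊆ S := by
  set step : Set α → Set α := fun S => S ∪ ⋃ F : {F : Finset α // ↑F ⊆ S}, g F
  set S : ℕ → Set α := fun n => step^[n] S₀
  have hS_succ (n : ℕ) : S (n + 1) = step (S n) := Function.iterate_succ_apply' step n S₀
  have hmono : Monotone S :=
    monotone_nat_of_le_succ fun n => (hS_succ n).symm ▸ subset_union_left
  have hcard (n : ℕ) : #(S n) < κ := by
    induction n with
    | zero => exact hS₀
    | succ n ih =>
      rw [hS_succ]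
      exact (mk_union_le _ _).trans_lt <| add_lt_of_lt hreg.aleph0_le ih <|
        mk_iUnion_lt_of_isRegular hreg (mk_finset_subset_lt hκ ih) fun F => hg F
  refine ⟨⋃ n, S n, subset_iUnion S 0, mk_iUnion_nat_lt_of_isRegular hκ hreg hcard,
    fun F hF => ?_⟩
  obtain ⟨n, hn⟩ := hmono.directed_le.exists_mem_subset_of_finset_subset_biUnion hF
  have hgF : g F ⊆ S (n + 1) := by
    rw [hS_succ]
    exact (subset_iUnion (fun F : {F : Finset α // ↑F ⊆ S n} => g F) ⟨F, hn⟩).trans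
      subset_union_right
  exact hgF.trans (subset_iUnion S _)

end Cardinal

namespace TightnessLT

variable {Y Z : Type u} [TopologicalSpace Y] [TopologicalSpace Z] {κ : Cardinal.{u}}

lemma exists_subset_mem_closure_image (h : TightnessLT Z κ) {f : Y → Z} (hf : Continuous f)
    {A : Set Y} {y : Y} (hy : y ∈ closure A) : ∃ T ⊆ A, #T < κ ∧ f y ∈ closure (f '' T) := by
  obtain ⟨B, hBA, hBcard, hyB⟩ := h (f '' A) (f y) (map_mem_closure hf hy (mapsTo_image f A))
  obtain ⟨T, hT, hbij⟩ := exists_subset_bijOn (A ∩ f ⁻¹' B) f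
  rw [image_inter_preimage, inter_eq_right.mpr hBA] at hbij
  refine ⟨T, hT.trans inter_subset_left, ?_, hbij.image_eq ▸ hyB⟩
  rwa [← mk_image_eq_of_injOn f T hbij.injOn, hbij.image_eq]

lemma of_homeomorph (h : TightnessLT Y κ) (e : Y ≃ₜ Z) : TightnessLT Z κ := by
  intro A z hz
  obtain ⟨T, hTA, hTcard, hzT⟩ := h.exists_subset_mem_closure_image e.symm.continuous hz
  exact ⟨T, hTA, hTcard, by rwa [← e.symm.image_closure, e.symm.injective.mem_set_image] at hzT⟩

end TightnessLT

lemma tightnessLT_pi_finset {Λ : Type u} {X : Λ → Type u} [∀ l, TopologicalSpace (X l)]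
    {κ : Cardinal.{u}} (hfin : ∀ (n : ℕ) (l : Fin n → Λ), TightnessLT (∀ i, X (l i)) κ)
    (F : Finset Λ) : TightnessLT (∀ i : F, X i) κ :=
  (hfin _ (Subtype.val ∘ F.equivFin.symm)).of_homeomorph
    (Homeomorph.piCongrLeft (Y := fun i : F => X i) F.equivFin.symm)

lemma mem_closure_of_forall_finset_restrict {ι : Type*} {X : ι → Type*}
    [∀ i, TopologicalSpace (X i)] {z : ∀ i, X i} {B : Set (∀ i, X i)} {S : Set ι}
    (hB : ∀ b ∈ B, ∀ i ∉ S, b i = z i)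
    (h : ∀ F : Finset ι, ↑F ⊆ S → F.restrict z ∈ closure (F.restrict '' B)) :
    z ∈ closure B := by
  classical
  rw [mem_closure_iff]
  intro o ho hzo
  obtain ⟨I, u, hu, hIu⟩ := isOpen_pi_iff.mp ho z hzo
  set F := I.filter (· ∈ S)
  have hFI {i : ι} (hi : i ∈ F) : i ∈ I := (Finset.mem_filter.mp hi).1
  have hV : IsOpen ((univ : Set F).pi fun i => u i) :=
    isOpen_set_pi finite_univ fun i _ => (hu i (hFI i.2)).1
  obtain ⟨_, hbV, b, hbB, rfl⟩ := mem_closure_iff.mp (h F fun i hi => (Finset.mem_filter.mp hi).2)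
    _ hV fun i _ => (hu i (hFI i.2)).2
  refine ⟨b, hIu fun i hi => ?_, hbB⟩
  by_cases hiS : i ∈ S
  · exact hbV ⟨i, Finset.mem_filter.mpr ⟨hi, hiS⟩⟩ (mem_univ _)
  · exact (hB b hbB i hiS).symm ▸ (hu i hi).2

/-- Kombarov–Malykhin: if every finite subproduct has tightness `< κ`, then the
`Σ_κ`-product about the base point `p` has tightness `< κ`. -/
theorem sigmaProduct_tightness {Λ : Type u} (X : Λ → Type u)
    [∀ l, TopologicalSpace (X l)] (κ : Cardinal.{u})
    (hκ : Cardinal.aleph0 < κ) (hreg : κ.IsRegular)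
    (hfin : ∀ (n : ℕ) (l : Fin n → Λ), TightnessLT (∀ i, X (l i)) κ)
    (p : ∀ l, X l) :
    TightnessLT {x : ∀ l, X l // Cardinal.mk {l | x l ≠ p l} < κ} κ := by
  intro A z hz
  have hT (F : Finset Λ) : ∃ T ⊆ A, #T < κ ∧
      F.restrict z.1 ∈ closure (F.restrict '' (Subtype.val '' T)) := by
    obtain ⟨T, hTA, hTcard, hzT⟩ := (tightnessLT_pi_finset hfin F).exists_subset_mem_closure_image
      (F.continuous_restrict.comp continuous_subtype_val) hz
    exact ⟨T, hTA, hTcard, by rwa [image_image]⟩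
  choose T hTA hTcard hTz using hT
  obtain ⟨S, hzS, hScard, hSclosed⟩ := exists_superset_card_lt_finset_closed hκ hreg
    (fun F => ⋃ a : T F, {l | a.1.1 l ≠ p l})
    (fun F => mk_iUnion_lt_of_isRegular hreg (hTcard F) fun a => a.1.2) z.2
  refine ⟨⋃ F : {F : Finset Λ // ↑F ⊆ S}, T F, iUnion_subset fun F => hTA F,
    mk_iUnion_lt_of_isRegular hreg (mk_finset_subset_lt hκ hScard) fun F => hTcard F, ?_⟩
  rw [closure_subtype]
  refine mem_closure_of_forall_finset_restrict ?_ fun F hF =>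
    closure_mono (image_mono (image_mono (subset_iUnion_of_subset ⟨F, hF⟩ subset_rfl))) (hTz F)
  rintro _ ⟨b, hb, rfl⟩ l hl
  obtain ⟨F, hbF⟩ := mem_iUnion.mp hb
  have hbl : b.1 l = p l :=
    not_not.mp fun hne => hl (hSclosed F F.2 (mem_iUnion.mpr ⟨⟨b, hbF⟩, hne⟩))
  have hzl : z.1 l = p l := not_not.mp fun hne => hl (hzS hne)
  exact hbl.trans hzl.symm
end
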